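/- For every α ∈ ℕ and every integer r with α ≤ r ≤ 4α, there exist δ ∈ ℤ_p and u, u' ∈ Ũ such that |δ|_p ≤ p^{r−4α} ≤ 1 and D_α·k_δ·D_α = u·D(r, 2α−r, −2α)·u'. (One may take δ = p^{4α−r}.) -/

import Mathlib

open Matrix

/-- `D(a,b,c) = diag(p^{-a}, p^{-b}, p^{-c})` in `SL₃(ℚ_p)` (for `a+b+c=0`). -/
noncomputable def DmatP (p : ℕ) [Fact p.Prime] (a b c : ℤ) : Matrix (Fin 3) (Fin 3) ℚ_[p] :=
  Matrix.diagonal ![(p : ℚ_[p]) ^ (-a), (p : ℚ_[p]) ^ (-b), (p : ℚ_[p]) ^ (-c)]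

/-- The matrix `k_δ ∈ SL₃(ℤ_p)` for `δ ∈ ℤ_p`. -/
noncomputable def kMatP (p : ℕ) [Fact p.Prime] (δ : ℤ_[p]) : Matrix (Fin 3) (Fin 3) ℚ_[p] :=
  !![(δ : ℚ_[p]), -1, 0;
     1, 0, 0;
     0, 0, 1]

/-- The block-diagonal `(2+1)` subgroup `Ũ` of `K = SL₃(ℤ_p)`. -/
def UtildeP (p : ℕ) [Fact p.Prime] : Set (Matrix (Fin 3) (Fin 3) ℤ_[p]) :=
  {A | A.det = 1 ∧ A 0 2 = 0 ∧ A 1 2 = 0 ∧ A 2 0 = 0 ∧ A 2 1 = 0}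

/-! Multiplying `k_δ` by `D_α` on both sides gives the block matrix with `2 × 2` block
`[[p^{-4α} δ, -p^{-α}], [p^{-α}, 0]]`, while multiplying `diag(e₁, e₂, e₃)` by the lower
transvection with entry `c` on the left and the upper one with entry `-c` on the right gives the
block `[[e₁, -c e₁], [c e₁, e₂ - c² e₁]]`. With `δ = p^{4α-r}`, `c = p^{r-α}` and
`(e₁, e₂, e₃) = (p^{-r}, p^{r-2α}, p^{2α})` the two agree, and the transvections lie in `Ũ`
because `r ≥ α` makes `c` integral. -/

theorem Matrix.transvection_map {n R S : Type*} [Fintype n] [DecidableEq n]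
    [CommRing R] [CommRing S] (f : R →+* S) (i j : n) (c : R) :
    (transvection i j c).map f = transvection i j (f c) := by
  simp [transvection, Matrix.map_add, Matrix.map_one, Matrix.map_single]

theorem transvection_mem_UtildeP {p : ℕ} [Fact p.Prime] {i j : Fin 3} (hij : i ≠ j)
    (hi : i ≠ 2) (hj : j ≠ 2) (c : ℤ_[p]) : transvection i j c ∈ UtildeP p :=
  ⟨det_transvection_of_ne i j hij c, by simp [transvection, hi, hj]⟩

theorem diagonal_mul_kMat_mul_diagonal {R : Type*} [CommRing R] {x y z d c e₁ e₂ e₃ : R}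
    (h₁ : x ^ 2 * d = e₁) (h₂ : x * y = c * e₁) (h₃ : c ^ 2 * e₁ = e₂) (h₄ : z ^ 2 = e₃) :
    diagonal ![x, y, z] * !![d, -1, 0; 1, 0, 0; 0, 0, 1] * diagonal ![x, y, z] =
      transvection 1 0 c * diagonal ![e₁, e₂, e₃] * transvection 0 1 (-c) := by
  subst h₁ h₃ h₄
  ext i j
  fin_cases i <;> fin_cases j <;>
    simp [transvection, Matrix.mul_apply, Fin.sum_univ_three, Matrix.single_apply] <;> grind

theorem diagonal_zpow_mul_kMat_mul_diagonal_zpow {K : Type*} [Field K] {t : K} (ht : t ≠ 0)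
    (a r : ℤ) :
    diagonal ![t ^ (-(2 * a)), t ^ (-(-a)), t ^ (-(-a))] *
        !![t ^ (4 * a - r), -1, 0; 1, 0, 0; 0, 0, 1] *
        diagonal ![t ^ (-(2 * a)), t ^ (-(-a)), t ^ (-(-a))] =
      transvection 1 0 (t ^ (r - a)) *
        diagonal ![t ^ (-r), t ^ (-(2 * a - r)), t ^ (-(-(2 * a)))] *
        transvection 0 1 (-t ^ (r - a)) := by
  apply diagonal_mul_kMat_mul_diagonal
  · rw [← zpow_natCast, ← _root_.zpow_mul, ← zpow_add₀ ht]; ring_nf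
  · rw [← zpow_add₀ ht, ← zpow_add₀ ht]; ring_nf
  · rw [← zpow_natCast, ← _root_.zpow_mul, ← zpow_add₀ ht]; ring_nf
  · rw [← zpow_natCast, ← _root_.zpow_mul]; ring_nf

/-- Lemma (non-archimedean spheres distorted): for integers `α ≤ r ≤ 4α` there are
`δ ∈ ℤ_p` with `|δ|_p ≤ p^{r-4α} ≤ 1` and `u, u' ∈ Ũ` with
`D_α k_δ D_α = u D(r, 2α-r, -2α) u'`. -/
theorem spheres_distorted_padic (p : ℕ) [Fact p.Prime] (α : ℕ) (r : ℤ)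
    (hr₁ : (α : ℤ) ≤ r) (hr₂ : r ≤ 4 * (α : ℤ)) :
    ∃ δ : ℤ_[p],
      ‖δ‖ ≤ (p : ℝ) ^ (r - 4 * (α : ℤ)) ∧ (p : ℝ) ^ (r - 4 * (α : ℤ)) ≤ 1 ∧
      ∃ u ∈ UtildeP p, ∃ u' ∈ UtildeP p,
        DmatP p (2 * α) (-α) (-α) * kMatP p δ * DmatP p (2 * α) (-α) (-α) =
          u.map ((↑) : ℤ_[p] → ℚ_[p]) *
            DmatP p r (2 * α - r) (-(2 * α)) *
            u'.map ((↑) : ℤ_[p] → ℚ_[p]) := by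
  obtain ⟨n, hn⟩ : ∃ n : ℕ, (n : ℤ) = 4 * α - r := ⟨_, Int.toNat_of_nonneg (by omega)⟩
  obtain ⟨m, hm⟩ : ∃ m : ℕ, (m : ℤ) = r - α := ⟨_, Int.toNat_of_nonneg (by omega)⟩
  have hp : (p : ℚ_[p]) ≠ 0 := by exact_mod_cast (Fact.out : p.Prime).ne_zero
  refine ⟨p ^ n, ?_, zpow_le_one_of_nonpos₀ ?_ (by omega),
    transvection 1 0 (p ^ m), transvection_mem_UtildeP (by decide) (by decide) (by decide) _,
    transvection 0 1 (-p ^ m), transvection_mem_UtildeP (by decide) (by decide) (by decide) _, ?_⟩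
  · rw [PadicInt.norm_p_pow, hn, neg_sub]
  · exact_mod_cast (Fact.out : p.Prime).one_le
  · rw [show ((↑) : ℤ_[p] → ℚ_[p]) = PadicInt.Coe.ringHom from rfl, transvection_map,
      transvection_map]
    simpa [DmatP, kMatP, ← hn, ← hm] using diagonal_zpow_mul_kMat_mul_diagonal_zpow hp α r
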